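/- Let V be a vertex algebra and M a subspace containing C₂(V) such that M/C₂(V) is an ideal of the commutative associative algebra V/C₂(V). Then M is a Mathieu-Zhao subspace of V with respect to the 0-th and (-1)-th products. -/

import Mathlib

open scoped BigOperators

noncomputable section

/-- The generalized binomial coefficient `p choose i` for `p : ℤ`, as a complex number. -/
def zchoose (p : ℤ) (i : ℕ) : ℂ :=
  (∏ j ∈ Finset.range i, ((p : ℂ) - (j : ℂ))) / (i.factorial : ℂ)

/-- A vertex algebra over `ℂ`: a bilinear system of modes `u ↦ u_n`, a vacuum vector `𝟙`,
truncation, vacuum/creation axioms and the Borcherds (Jacobi) identity. -/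
structure VertexAlgebra (V : Type) [AddCommGroup V] [Module ℂ V] where
  mode : V → ℤ → V → V
  one : V
  mode_add_left : ∀ (u v : V) (n : ℤ) (w : V), mode (u + v) n w = mode u n w + mode v n w
  mode_smul_left : ∀ (c : ℂ) (u : V) (n : ℤ) (w : V), mode (c • u) n w = c • mode u n w
  mode_add_right : ∀ (u : V) (n : ℤ) (v w : V), mode u n (v + w) = mode u n v + mode u n w
  mode_smul_right : ∀ (u : V) (n : ℤ) (c : ℂ) (v : V), mode u n (c • v) = c • mode u n v
  trunc : ∀ u v : V, ∃ N : ℤ, ∀ n ≥ N, mode u n v = 0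
  vacuum_left : ∀ (n : ℤ) (v : V), mode one n v = if n = -1 then v else 0
  creation_nonneg : ∀ (u : V) (n : ℤ), 0 ≤ n → mode u n one = 0
  creation : ∀ u : V, mode u (-1) one = u
  borcherds : ∀ (u v w : V) (p q r : ℤ),
    ∑ᶠ i : ℕ, zchoose p i • mode (mode u (r + i) v) (p + q - i) w =
      ∑ᶠ i : ℕ, ((-1 : ℂ) ^ i * zchoose r i) •
        (mode u (p + r - i) (mode v (q + i) w) -
          ((-1 : ℂ) ^ r) • mode v (q + r - i) (mode u (p + i) w))

/-- A list of mode indices all equal to `0` or `-1`. -/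
def GoodIdx (ns : List ℤ) : Prop := ∀ n ∈ ns, n = 0 ∨ n = -1

namespace VertexAlgebra

variable {V : Type} [AddCommGroup V] [Module ℂ V] (VA : VertexAlgebra V)

/-- The translation operator `𝒟 v = v_{-2} 𝟙`. -/
def D (v : V) : V := VA.mode v (-2) VA.one

/-- `C₂(V) = span_ℂ { u_{-2} v }`. -/
def C2 : Submodule ℂ V := Submodule.span ℂ {w : V | ∃ u v : V, w = VA.mode u (-2) v}

/-- `Cₙ(V) = span_ℂ { u_{-n} v }`. -/
def Cn (n : ℕ) : Submodule ℂ V :=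
  Submodule.span ℂ {w : V | ∃ u v : V, w = VA.mode u (-(n : ℤ)) v}


/-- The iterated word `a_{n₁} a_{n₂} ⋯ a_{n_t} a`. -/
def word (a : V) (ns : List ℤ) : V := ns.foldr (fun n acc => VA.mode a n acc) a

/-- The radical `r_{0,-1}(M)` of a subspace `M` with respect to the 0-th and (-1)-th products. -/
def rad (M : Set V) : Set V :=
  {v : V | ∃ m : ℕ, ∀ ns : List ℤ, GoodIdx ns → m ≤ ns.length → VA.word v ns ∈ M}

/-- The left-strong radical `lsr_{0,-1}(M)`. -/
def lsrad (M : Set V) : Set V :=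
  {v : V | ∀ b : V, ∃ m : ℕ, ∀ (ns : List ℤ) (s : ℤ), GoodIdx ns → m ≤ ns.length →
    (s = 0 ∨ s = -1) → VA.mode b s (VA.word v ns) ∈ M}

/-- The right-strong radical `rsr_{0,-1}(M)`. -/
def rsrad (M : Set V) : Set V :=
  {v : V | ∀ w : V, ∃ m : ℕ, ∀ (ns : List ℤ) (s : ℤ), GoodIdx ns → m ≤ ns.length →
    (s = 0 ∨ s = -1) → VA.mode (VA.word v ns) s w ∈ M}

/-- The strong radical `sr_{0,-1}(M) = lsr_{0,-1}(M) ∩ rsr_{0,-1}(M)`. -/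
def srad (M : Set V) : Set V := VA.lsrad M ∩ VA.rsrad M

/-- `M` is a Mathieu-Zhao subspace of `V` with respect to the 0-th and (-1)-th products. -/
def IsMZ (M : Set V) : Prop := VA.rad M = VA.srad M

/-- A (two-sided) ideal of a vertex algebra. -/
def IsIdeal (I : Submodule ℂ V) : Prop :=
  ∀ (v w : V) (n : ℤ), w ∈ I → VA.mode v n w ∈ I ∧ VA.mode w n v ∈ I

/-- `t`-th power of `a` under the (-1)-th product: `a_{-1}(a_{-1}(⋯ a))`, with `pow a 0 = 𝟙`. -/
def pow (a : V) (t : ℕ) : V :=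
  Nat.rec VA.one (fun _ acc => VA.mode a (-1) acc) t

end VertexAlgebra

/-- A homomorphism of vertex algebras: a linear map preserving all modes and the vacuum. -/
def VertexAlgebra.IsHom {V W : Type} [AddCommGroup V] [Module ℂ V] [AddCommGroup W]
    [Module ℂ W] (VA : VertexAlgebra V) (WA : VertexAlgebra W) (f : V →ₗ[ℂ] W) : Prop :=
  f VA.one = WA.one ∧ ∀ (u v : V) (n : ℤ), f (VA.mode u n v) = WA.mode (f u) n (f v)

/-- A vertex operator algebra: a `ℤ`-graded vertex algebra with finite-dimensional
pieces, grading bounded below, and a conformal vector `ω` whose modes `L(n) = ω_{n+1}`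
satisfy the Virasoro relations, give the grading by `L(0)`, and realize `L(-1) = 𝒟`. -/
structure VertexOperatorAlgebra (V : Type) [AddCommGroup V] [Module ℂ V]
    extends VertexAlgebra V where
  grade : ℤ → Submodule ℂ V
  internal : DirectSum.IsInternal grade
  one_mem : one ∈ grade 0
  mode_grade : ∀ {k m n : ℤ} {u w : V}, u ∈ grade k → w ∈ grade n →
    mode u m w ∈ grade (k + n - m - 1)
  fin_dim : ∀ n : ℤ, FiniteDimensional ℂ (grade n)
  bounded_below : ∃ n₀ : ℤ, ∀ n < n₀, grade n = ⊥
  omega : V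
  omega_mem : omega ∈ grade 2
  central_charge : ℂ
  virasoro : ∀ (m n : ℤ) (v : V),
    mode omega (m + 1) (mode omega (n + 1) v) - mode omega (n + 1) (mode omega (m + 1) v) =
      ((m : ℂ) - (n : ℂ)) • mode omega (m + n + 1) v +
        (if m + n = 0 then (((m : ℂ) ^ 3 - (m : ℂ)) / 12) * central_charge else 0) • v
  L0_grading : ∀ (n : ℤ) (v : V), v ∈ grade n → mode omega 1 v = (n : ℂ) • v
  L_neg1 : ∀ v : V, mode omega 0 v = mode v (-2) one


/-!
Modulo `C₂(V)` the (-1)-th product is commutative and associative and the 0-th product acts by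
derivations of it, so `b₀(v^{k+1}) ≡ (k+1)(b₀v)₋₁v^k`; in particular `v₀v^k ∈ C₂(V)`. Hence every
word in `v` built from 0-th and (-1)-th products either lies in `C₂(V)` or is a power `v^{t+1}`.
If all large powers of `v` lie in `M`, then so do their products with any `b` on either side:
the (-1)-th product because `M` is an ideal modulo `C₂(V)`, the 0-th product by the derivation
rule, and products on the right by skew-symmetry modulo `C₂(V)`.
-/

section SModEq

variable {R W ι : Type*} [Ring R] [AddCommGroup W] [Module R W] {U : Submodule R W}

theorem Submodule.finsum_mem {g : ι → W} (h : ∀ i, g i ∈ U) : ∑ᶠ i, g i ∈ U :=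
  finsum_induction (· ∈ U) U.zero_mem (fun _ _ => U.add_mem) h

theorem finsum_smodEq_single {g : ι → W} (hg : Function.HasFiniteSupport g) (i₀ : ι)
    (h : ∀ i ≠ i₀, g i ∈ U) : ∑ᶠ i, g i ≡ g i₀ [SMOD U] := by
  rw [SModEq.def, ← U.mkQ_apply, map_finsum U.mkQ hg]
  exact finsum_eq_single _ i₀ fun i hi => (Submodule.Quotient.mk_eq_zero U).mpr (h i hi)

theorem SModEq.mem_of_le {U' : Submodule R W} (hU : U ≤ U') {x y : W} (hxy : x ≡ y [SMOD U])
    (hy : y ∈ U') : x ∈ U' :=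
  SModEq.zero.mp ((hxy.mono hU).trans (SModEq.zero.mpr hy))

end SModEq

@[simp]
theorem zchoose_zero_right (p : ℤ) : zchoose p 0 = 1 := by
  simp [zchoose]

theorem zchoose_zero_left {i : ℕ} (hi : i ≠ 0) : zchoose 0 i = 0 := by
  rw [zchoose, Finset.prod_eq_zero (Finset.mem_range.mpr (Nat.pos_of_ne_zero hi)) (by simp),
    zero_div]

theorem zchoose_neg_two (i : ℕ) : zchoose (-2) i = (-1) ^ i * ((i : ℂ) + 1) := by
  have hprod : ∏ j ∈ Finset.range i, ((-2 : ℂ) - j) = (-1) ^ i * (i + 1).factorial := by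
    induction i with
    | zero => simp
    | succ n ih =>
      rw [Finset.prod_range_succ, ih, Nat.factorial_succ (n + 1)]
      push_cast
      ring
  have hfac : (i.factorial : ℂ) ≠ 0 := Nat.cast_ne_zero.mpr i.factorial_ne_zero
  rw [zchoose, Int.cast_neg, Int.cast_ofNat, hprod, Nat.factorial_succ]
  push_cast
  field_simp

namespace VertexAlgebra

variable {V : Type} [AddCommGroup V] [Module ℂ V] (VA : VertexAlgebra V)

@[simp]
theorem zero_mode (n : ℤ) (w : V) : VA.mode 0 n w = 0 := by
  simpa using VA.mode_smul_left 0 0 n w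

@[simp]
theorem mode_apply_zero (u : V) (n : ℤ) : VA.mode u n 0 = 0 := by
  simpa using VA.mode_smul_right u n 0 0

theorem mode_sub_left (u v : V) (n : ℤ) (w : V) :
    VA.mode (u - v) n w = VA.mode u n w - VA.mode v n w := by
  rw [sub_eq_add_neg, VA.mode_add_left, ← neg_one_smul ℂ v, VA.mode_smul_left,
    neg_one_smul, sub_eq_add_neg]

theorem mode_sub_right (u : V) (n : ℤ) (v w : V) :
    VA.mode u n (v - w) = VA.mode u n v - VA.mode u n w := by
  rw [sub_eq_add_neg, VA.mode_add_right, ← neg_one_smul ℂ w, VA.mode_smul_right,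
    neg_one_smul, sub_eq_add_neg]

theorem mode_mode_eq_finsum (u v w : V) (r q : ℤ) :
    VA.mode (VA.mode u r v) q w = ∑ᶠ i : ℕ, ((-1 : ℂ) ^ i * zchoose r i) •
      (VA.mode u (r - i) (VA.mode v (q + i) w) -
        ((-1 : ℂ) ^ r) • VA.mode v (q + r - i) (VA.mode u i w)) := by
  have hb := VA.borcherds u v w 0 q r
  rw [finsum_eq_single _ 0 fun i hi => by simp [zchoose_zero_left hi]] at hb
  simpa using hb

theorem mode_zero_mode (u v w : V) (q : ℤ) :
    VA.mode (VA.mode u 0 v) q w = VA.mode u 0 (VA.mode v q w) - VA.mode v q (VA.mode u 0 w) := by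
  rw [VA.mode_mode_eq_finsum, finsum_eq_single _ 0 fun i hi => by simp [zchoose_zero_left hi]]
  simp

theorem mode_D_neg (u w : V) (n : ℕ) :
    VA.mode (VA.D u) (-1 - n) w = ((n : ℂ) + 1) • VA.mode u (-2 - n) w := by
  have hvac (i : ℕ) : VA.mode VA.one (-1 - n + -2 - i) (VA.mode u i w) = 0 := by
    rw [VA.vacuum_left, if_neg (by omega)]
  rw [D, VA.mode_mode_eq_finsum, finsum_eq_single _ n fun i hi => by
    simp [hvac, VA.vacuum_left, show -1 - (n : ℤ) + i ≠ -1 by omega]]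
  simp only [hvac, VA.vacuum_left, zchoose_neg_two, if_pos (show -1 - (n : ℤ) + n = -1 by omega)]
  rw [smul_zero, sub_zero, ← mul_assoc, ← mul_pow]
  norm_num

theorem mode_mem_C2_of_le {n : ℤ} (hn : n ≤ -2) (u w : V) : VA.mode u n w ∈ VA.C2 := by
  obtain ⟨k, rfl⟩ : ∃ k : ℕ, n = -2 - k := ⟨(-2 - n).toNat, by omega⟩
  clear hn
  induction k generalizing u with
  | zero => exact Submodule.subset_span ⟨u, w, by simp⟩
  | succ k ih =>
    have hD := VA.mode_D_neg u w (k + 1)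
    refine (Submodule.smul_mem_iff _ (Nat.cast_add_one_ne_zero (R := ℂ) (k + 1))).mp ?_
    rw [← hD]
    convert ih (VA.D u) using 2
    push_cast
    ring

theorem mode_mem_C2_of_left_mem {x : V} (hx : x ∈ VA.C2) (w : V) {q : ℤ} (hq : q ≤ 0) :
    VA.mode x q w ∈ VA.C2 := by
  induction hx using Submodule.span_induction with
  | mem x hx =>
    obtain ⟨a, b, rfl⟩ := hx
    rw [VA.mode_mode_eq_finsum]
    exact Submodule.finsum_mem fun i => Submodule.smul_mem _ _ <| Submodule.sub_mem _
      (VA.mode_mem_C2_of_le (by omega) _ _)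
      (Submodule.smul_mem _ _ (VA.mode_mem_C2_of_le (by omega) _ _))
  | zero => simp
  | add x y _ _ hx hy => rw [VA.mode_add_left]; exact Submodule.add_mem _ hx hy
  | smul c x _ hx => rw [VA.mode_smul_left]; exact Submodule.smul_mem _ c hx

theorem mode_smodEq_skew (u v : V) (n : ℤ) :
    VA.mode u n v ≡ ((-1 : ℂ) ^ (n + 1)) • VA.mode v n u [SMOD VA.C2] := by
  have hmem : ∑ᶠ i : ℕ, zchoose (-1) i •
      VA.mode (VA.mode u (n + 1 + i) v) (-1 + -1 - i) VA.one ∈ VA.C2 :=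
    Submodule.finsum_mem fun i => Submodule.smul_mem _ _ (VA.mode_mem_C2_of_le (by omega) _ _)
  rw [VA.borcherds, finsum_eq_single _ 0 fun i hi => by
    simp [VA.creation_nonneg _ (-1 + i) (by omega)]] at hmem
  rw [SModEq.sub_mem]
  simpa [VA.creation, show -1 + (n + 1) = n by ring] using hmem

theorem mode_neg_one_comm (u v : V) :
    VA.mode u (-1) v ≡ VA.mode v (-1) u [SMOD VA.C2] := by
  simpa using VA.mode_smodEq_skew u v (-1)

theorem mode_zero_anticomm (u v : V) : VA.mode u 0 v ≡ -VA.mode v 0 u [SMOD VA.C2] := by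
  simpa using VA.mode_smodEq_skew u v 0

theorem mode_self_zero_mem_C2 (v : V) : VA.mode v 0 v ∈ VA.C2 := by
  have h := SModEq.sub_mem.mp (VA.mode_zero_anticomm v v)
  rw [sub_neg_eq_add, ← two_smul ℂ] at h
  exact (Submodule.smul_mem_iff _ two_ne_zero).mp h

theorem mode_mem_C2_of_right_mem (u : V) {x : V} (hx : x ∈ VA.C2) {q : ℤ} (hq : q ≤ 0) :
    VA.mode u q x ∈ VA.C2 :=
  (VA.mode_smodEq_skew u x q).mem_of_le le_rfl
    (Submodule.smul_mem _ _ (VA.mode_mem_C2_of_left_mem hx u hq))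

theorem mode_congr_left {x y : V} (h : x ≡ y [SMOD VA.C2]) (w : V) {q : ℤ} (hq : q ≤ 0) :
    VA.mode x q w ≡ VA.mode y q w [SMOD VA.C2] := by
  rw [SModEq.sub_mem, ← VA.mode_sub_left]
  exact VA.mode_mem_C2_of_left_mem (SModEq.sub_mem.mp h) w hq

theorem mode_congr_right (u : V) {x y : V} (h : x ≡ y [SMOD VA.C2]) {q : ℤ} (hq : q ≤ 0) :
    VA.mode u q x ≡ VA.mode u q y [SMOD VA.C2] := by
  rw [SModEq.sub_mem, ← VA.mode_sub_right]
  exact VA.mode_mem_C2_of_right_mem u (SModEq.sub_mem.mp h) hq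

theorem mode_neg_one_assoc (u x y : V) :
    VA.mode (VA.mode u (-1) x) (-1) y ≡ VA.mode u (-1) (VA.mode x (-1) y) [SMOD VA.C2] := by
  obtain ⟨N₁, hN₁⟩ := VA.trunc x y
  obtain ⟨N₂, hN₂⟩ := VA.trunc u y
  -- every summand other than `u₋₁x₋₁y` involves a mode of index `≤ -2`
  rw [VA.mode_mode_eq_finsum]
  refine (finsum_smodEq_single ?_ 0 fun i hi => ?_).trans ?_
  · refine (Set.finite_Iio (N₁.toNat + 1 + N₂.toNat)).subset fun i hi => ?_
    by_contra hiN
    simp only [Set.mem_Iio, not_lt] at hiN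
    simp [hN₁ (-1 + i) (by omega), hN₂ i (by omega)] at hi
  · exact Submodule.smul_mem _ _ <| Submodule.sub_mem _
      (VA.mode_mem_C2_of_le (by omega) _ _)
      (Submodule.smul_mem _ _ (VA.mode_mem_C2_of_le (by omega) _ _))
  · rw [SModEq.sub_mem]
    simpa using VA.mode_mem_C2_of_le (le_refl (-2)) x (VA.mode u 0 y)

theorem mode_neg_one_left_comm (u x y : V) :
    VA.mode u (-1) (VA.mode x (-1) y) ≡ VA.mode x (-1) (VA.mode u (-1) y) [SMOD VA.C2] :=
  calc VA.mode u (-1) (VA.mode x (-1) y)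
    _ ≡ VA.mode (VA.mode u (-1) x) (-1) y [SMOD VA.C2] := (VA.mode_neg_one_assoc u x y).symm
    _ ≡ VA.mode (VA.mode x (-1) u) (-1) y [SMOD VA.C2] :=
      VA.mode_congr_left (VA.mode_neg_one_comm u x) y (by norm_num)
    _ ≡ VA.mode x (-1) (VA.mode u (-1) y) [SMOD VA.C2] := VA.mode_neg_one_assoc x u y

theorem pow_zero (v : V) : VA.pow v 0 = VA.one := rfl

theorem pow_succ (v : V) (k : ℕ) : VA.pow v (k + 1) = VA.mode v (-1) (VA.pow v k) := rfl

theorem mode_zero_pow_succ (b v : V) (k : ℕ) :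
    VA.mode b 0 (VA.pow v (k + 1)) ≡
      ((k : ℂ) + 1) • VA.mode (VA.mode b 0 v) (-1) (VA.pow v k) [SMOD VA.C2] := by
  induction k with
  | zero => simp [VA.pow_succ, VA.pow_zero, VA.creation]
  | succ k ih =>
    set b₀v := VA.mode b 0 v
    have hleibniz : VA.mode b 0 (VA.pow v (k + 2)) =
        VA.mode b₀v (-1) (VA.pow v (k + 1)) + VA.mode v (-1) (VA.mode b 0 (VA.pow v (k + 1))) := by
      rw [VA.pow_succ v (k + 1), VA.mode_zero_mode]
      abel
    calc VA.mode b 0 (VA.pow v (k + 2))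
      _ ≡ VA.mode b₀v (-1) (VA.pow v (k + 1)) +
          ((k : ℂ) + 1) • VA.mode v (-1) (VA.mode b₀v (-1) (VA.pow v k)) [SMOD VA.C2] := by
        rw [hleibniz, ← VA.mode_smul_right]
        exact SModEq.rfl.add (VA.mode_congr_right v ih (by norm_num))
      _ ≡ VA.mode b₀v (-1) (VA.pow v (k + 1)) +
          ((k : ℂ) + 1) • VA.mode b₀v (-1) (VA.mode v (-1) (VA.pow v k)) [SMOD VA.C2] :=
        SModEq.rfl.add ((VA.mode_neg_one_left_comm v b₀v _).smul _)
      _ = (((k + 1 : ℕ) : ℂ) + 1) • VA.mode b₀v (-1) (VA.pow v (k + 1)) := by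
        rw [← VA.pow_succ]
        push_cast
        module

theorem mode_self_zero_pow_mem_C2 (v : V) (k : ℕ) : VA.mode v 0 (VA.pow v k) ∈ VA.C2 := by
  cases k with
  | zero => simp [VA.pow_zero, VA.creation_nonneg v 0 le_rfl]
  | succ k =>
    exact (VA.mode_zero_pow_succ v v k).mem_of_le le_rfl (Submodule.smul_mem _ _
      (VA.mode_mem_C2_of_left_mem (VA.mode_self_zero_mem_C2 v) _ (by norm_num)))

theorem word_replicate_neg_one (v : V) (t : ℕ) :
    VA.word v (List.replicate t (-1)) = VA.pow v (t + 1) := by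
  induction t with
  | zero => simp [word, VA.pow_succ, VA.pow_zero, VA.creation]
  | succ t ih => rw [List.replicate_succ, word, List.foldr_cons, ← word, ih, ← VA.pow_succ]

theorem word_mem_C2_or_eq_pow (v : V) {ns : List ℤ} (hns : GoodIdx ns) :
    VA.word v ns ∈ VA.C2 ∨ VA.word v ns = VA.pow v (ns.length + 1) := by
  induction ns with
  | nil => simp [word, VA.pow_succ, VA.pow_zero, VA.creation]
  | cons n ns ih =>
    obtain ⟨hn, hns⟩ := List.forall_mem_cons.mp hns
    have hword : VA.word v (n :: ns) = VA.mode v n (VA.word v ns) := rfl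
    rcases ih hns with hC2 | hpow
    · exact .inl (hword ▸ VA.mode_mem_C2_of_right_mem v hC2 (by omega))
    · rcases hn with rfl | rfl
      · exact .inl (hword ▸ hpow ▸ VA.mode_self_zero_pow_mem_C2 v _)
      · exact .inr (hword ▸ hpow ▸ rfl)

theorem mode_pow_succ_mem {M : Submodule ℂ V} (hC2 : VA.C2 ≤ M)
    (hideal : ∀ b w : V, w ∈ M → VA.mode b (-1) w ∈ M) {v : V} {k : ℕ}
    (hk : VA.pow v k ∈ M) (hk₁ : VA.pow v (k + 1) ∈ M) (b : V) {s : ℤ} (hs : s = 0 ∨ s = -1) :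
    VA.mode b s (VA.pow v (k + 1)) ∈ M := by
  rcases hs with rfl | rfl
  · exact (VA.mode_zero_pow_succ b v k).mem_of_le hC2 (M.smul_mem _ (hideal _ _ hk))
  · exact hideal b _ hk₁

theorem mode_word_mem {M : Submodule ℂ V} (hC2 : VA.C2 ≤ M)
    (hideal : ∀ b w : V, w ∈ M → VA.mode b (-1) w ∈ M) {v : V} {m : ℕ}
    (hv : ∀ t ≥ m, VA.pow v (t + 1) ∈ M) {ns : List ℤ} (hns : GoodIdx ns)
    (hlen : m + 1 ≤ ns.length) (b : V) {s : ℤ} (hs : s = 0 ∨ s = -1) :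
    VA.mode b s (VA.word v ns) ∈ M := by
  rcases VA.word_mem_C2_or_eq_pow v hns with hword | hword
  · exact hC2 (VA.mode_mem_C2_of_right_mem b hword (by omega))
  · obtain ⟨k, hk⟩ : ∃ k, ns.length = k + 1 := ⟨ns.length - 1, by omega⟩
    rw [hword]
    exact VA.mode_pow_succ_mem hC2 hideal (hk ▸ hv k (by omega)) (hv _ (by omega)) b hs

end VertexAlgebra

/-- Let `M ⊇ C₂(V)` be a subspace such that `M/C₂(V)` is an ideal of the
commutative algebra `V/C₂(V)` (expressed via representatives: `M` is closed under the
(-1)-th product by arbitrary elements of `V`). Then `M` is a MZ_{0,-1}-subspace of `V`. -/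
theorem stmt14 {V : Type} [AddCommGroup V] [Module ℂ V] (VA : VertexAlgebra V)
    (M : Submodule ℂ V) (hC2 : VA.C2 ≤ M)
    (hideal : ∀ b w : V, w ∈ M → VA.mode b (-1) w ∈ M) :
    VA.IsMZ (M : Set V) := by
  refine Set.Subset.antisymm (fun v ⟨m, hm⟩ => ?_) fun v ⟨_, hv⟩ => ?_
  · have hpow (t : ℕ) (ht : t ≥ m) : VA.pow v (t + 1) ∈ M := by
      simpa [VA.word_replicate_neg_one] using
        hm _ (fun n hn => .inr (List.eq_of_mem_replicate hn)) (by simpa using ht)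
    refine ⟨fun b => ⟨m + 1, fun ns s hns hlen hs => ?_⟩,
      fun w => ⟨m + 1, fun ns s hns hlen hs => ?_⟩⟩
    · exact VA.mode_word_mem hC2 hideal hpow hns hlen b hs
    · exact (VA.mode_smodEq_skew _ w s).mem_of_le hC2
        (M.smul_mem _ (VA.mode_word_mem hC2 hideal hpow hns hlen w hs))
  · obtain ⟨m, hm⟩ := hv VA.one
    exact ⟨m, fun ns hns hlen => by simpa [VA.creation] using hm ns (-1) hns hlen (.inr rfl)⟩
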